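/- arXiv:2409.03092 — 2 statements merged into one kernel-verified Lean document; each statement's English description precedes it below -/
import Mathlib

section
/- Let h ≥ 1 and let (V_k) be a nonnegative sequence satisfying V_{k+1} ≤ ((h+k-1)/(h+k+1)) V_k + A/(1+h+k)² + B/(1+h+k)² for all k ≥ 0, where A, B ≥ 0. Then for all k ≥ 0, V_{k+1} ≤ h²V_0/(1+h+k)² + A/(1+h+k) + B/(1+h+k). -/
theorem stmt_13 (h A B : ℝ) (hh : 1 ≤ h) (hA : 0 ≤ A) (hB : 0 ≤ B)
    (V : ℕ → ℝ) (hV : ∀ k, 0 ≤ V k)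
    (hrec : ∀ k : ℕ, V (k + 1) ≤ ((h + k - 1) / (h + k + 1)) * V k
      + A / (1 + h + k) ^ 2 + B / (1 + h + k) ^ 2) :
    ∀ k : ℕ, V (k + 1) ≤ h ^ 2 * V 0 / (1 + h + k) ^ 2
      + A / (1 + h + k) + B / (1 + h + k) := by
  have main : ∀ k : ℕ, V k ≤ h ^ 2 * V 0 / (h + k) ^ 2 + A / (h + k) + B / (h + k) := by
    intro k
    induction k with
    | zero =>
      have hh0 : (0:ℝ) < h := by linarith
      simp only [Nat.cast_zero, add_zero]
      have e : h ^ 2 * V 0 / h ^ 2 = V 0 := by field_simp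
      rw [e]
      have h1 : 0 ≤ A / h := by positivity
      have h2 : 0 ≤ B / h := by positivity
      linarith
    | succ k ih =>
      have hk0 : (0:ℝ) ≤ (k:ℝ) := Nat.cast_nonneg k
      set c : ℝ := h + (k:ℝ) with hc
      have hc1 : 1 ≤ c := by simp only [hc]; linarith
      have hc0 : 0 < c := by linarith
      have hcp1 : 0 < c + 1 := by linarith
      have hrk := hrec k
      rw [show h + (k:ℝ) - 1 = c - 1 from by rw [hc],
          show h + (k:ℝ) + 1 = c + 1 from by rw [hc],
          show 1 + h + (k:ℝ) = c + 1 from by rw [hc]; ring] at hrk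
      have hfac : 0 ≤ (c - 1) / (c + 1) := div_nonneg (by linarith) (by linarith)
      have hmul : (c - 1) / (c + 1) * V k
          ≤ (c - 1) / (c + 1) * (h ^ 2 * V 0 / c ^ 2 + A / c + B / c) :=
        mul_le_mul_of_nonneg_left ih hfac
      have key : h ^ 2 * V 0 / (c + 1) ^ 2 + A / (c + 1) + B / (c + 1)
          - ((c - 1) / (c + 1) * (h ^ 2 * V 0 / c ^ 2 + A / c + B / c)
            + A / (c + 1) ^ 2 + B / (c + 1) ^ 2)
          = h ^ 2 * V 0 / (c ^ 2 * (c + 1) ^ 2) + A / (c * (c + 1) ^ 2)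
            + B / (c * (c + 1) ^ 2) := by
        field_simp
        ring
      have nn : 0 ≤ h ^ 2 * V 0 / (c ^ 2 * (c + 1) ^ 2) + A / (c * (c + 1) ^ 2)
          + B / (c * (c + 1) ^ 2) := by
        have := hV 0
        positivity
      push_cast
      rw [show h + ((k:ℝ) + 1) = c + 1 from by rw [hc]; ring]
      linarith
  intro k
  have := main (k + 1)
  push_cast at this
  rw [show (1:ℝ) + h + (k:ℝ) = h + ((k:ℝ) + 1) from by ring]
  exact this
end

section
/- Let e_{t+1} = (1-α)e_t + α(ξ_t + g_t) where ξ_t is a zero-mean random vector given the past with E‖ξ_t‖² ≤ σ², and ‖g_t‖ ≤ L‖x_t - x̄‖. Then E[‖e_{t+1}‖²] ≤ (1-α)E[‖e_t‖²] + αL²E[‖x_t - x̄‖²] + α²σ² for 0 < α ≤ 1. -/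
/-!
Write `v = (1 - α) • e + α • g`, so that the new error is `v + α • ξ`. Since `v` is measurable with
respect to the past and the noise `ξ` has zero conditional mean, the cross term `E⟪v, ξ⟫` vanishes
and `E‖v + α • ξ‖² = E‖v‖² + α² E‖ξ‖²`. Convexity of `‖·‖²` gives
`‖v‖² ≤ (1 - α) ‖e‖² + α ‖g‖²`, and `‖g‖² ≤ L² ‖x - x̄‖²` pointwise.
-/

open MeasureTheory
open scoped InnerProductSpace

lemma norm_one_sub_smul_add_smul_sq_le {E : Type*} [SeminormedAddCommGroup E] [NormedSpace ℝ E]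
    {a : ℝ} (ha₀ : 0 ≤ a) (ha₁ : a ≤ 1) (x y : E) :
    ‖(1 - a) • x + a • y‖ ^ 2 ≤ (1 - a) * ‖x‖ ^ 2 + a * ‖y‖ ^ 2 :=
  (convexOn_univ_norm.pow (fun _ _ ↦ norm_nonneg _) 2).2 trivial trivial (sub_nonneg.2 ha₁) ha₀
    (by ring)

namespace MeasureTheory

variable {Ω E : Type*} {m mΩ : MeasurableSpace Ω} {μ : Measure Ω}

section InnerProductSpace

variable [NormedAddCommGroup E] [InnerProductSpace ℝ E]

lemma MemLp.integrable_inner {f g : Ω → E} (hf : MemLp f 2 μ) (hg : MemLp g 2 μ) :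
    Integrable (fun ω ↦ ⟪f ω, g ω⟫_ℝ) μ :=
  memLp_one_iff_integrable.1 <| (innerSL ℝ).memLp_of_bilin 1 hf hg

lemma integral_inner_eq_zero_of_condExp_eq_zero [CompleteSpace E] (hm : m ≤ mΩ)
    [SigmaFinite (μ.trim hm)] {v ξ : Ω → E} (hv : AEStronglyMeasurable[m] v μ)
    (hvξ : Integrable (fun ω ↦ ⟪v ω, ξ ω⟫_ℝ) μ) (hξ : Integrable ξ μ) (hξ₀ : μ[ξ|m] =ᵐ[μ] 0) :
    ∫ ω, ⟪v ω, ξ ω⟫_ℝ ∂μ = 0 := by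
  have hpull := condExp_bilin_of_aestronglyMeasurable_left (innerSL ℝ) hv hvξ hξ
  rw [← integral_condExp hm]
  refine integral_eq_zero_of_ae ?_
  filter_upwards [hpull, hξ₀] with ω hω hξω
  exact hω.trans (by simp [hξω])

lemma integral_norm_add_smul_sq_of_condExp_eq_zero [CompleteSpace E] [IsFiniteMeasure μ]
    (hm : m ≤ mΩ) {v ξ : Ω → E} (hv : MemLp v 2 μ)
    (hvm : AEStronglyMeasurable[m] v μ) (hξ : MemLp ξ 2 μ) (hξ₀ : μ[ξ|m] =ᵐ[μ] 0) (a : ℝ) :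
    ∫ ω, ‖v ω + a • ξ ω‖ ^ 2 ∂μ = ∫ ω, ‖v ω‖ ^ 2 ∂μ + a ^ 2 * ∫ ω, ‖ξ ω‖ ^ 2 ∂μ := by
  have hvξ := hv.integrable_inner hξ
  have hcross := integral_inner_eq_zero_of_condExp_eq_zero hm hvm hvξ
    (hξ.integrable one_le_two) hξ₀
  have hexpand : ∀ ω, ‖v ω + a • ξ ω‖ ^ 2
      = ‖v ω‖ ^ 2 + 2 * a * ⟪v ω, ξ ω⟫_ℝ + a ^ 2 * ‖ξ ω‖ ^ 2 := by
    intro ω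
    rw [norm_add_sq_real, real_inner_smul_right, norm_smul, mul_pow, Real.norm_eq_abs, sq_abs]
    ring
  have hv2 := hv.integrable_norm_pow two_ne_zero
  have hξ2 := hξ.integrable_norm_pow two_ne_zero
  simp_rw [hexpand]
  rw [integral_add ?_ (hξ2.const_mul _), integral_add hv2 (hvξ.const_mul _),
    integral_const_mul, integral_const_mul, hcross]
  · ring
  · exact hv2.add (hvξ.const_mul _)

end InnerProductSpace

lemma integral_norm_sq_le_of_norm_le [NormedAddCommGroup E] {F : Type*} [NormedAddCommGroup F]
    {f : Ω → E} {g : Ω → F} {L : ℝ} (hg : MemLp g 2 μ) (hfg : ∀ᵐ ω ∂μ, ‖f ω‖ ≤ L * ‖g ω‖) :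
    ∫ ω, ‖f ω‖ ^ 2 ∂μ ≤ L ^ 2 * ∫ ω, ‖g ω‖ ^ 2 ∂μ := by
  rw [← integral_const_mul]
  refine integral_mono_of_nonneg (.of_forall fun _ ↦ by positivity)
    ((hg.integrable_norm_pow two_ne_zero).const_mul _) ?_
  filter_upwards [hfg] with ω hω
  calc ‖f ω‖ ^ 2 ≤ (L * ‖g ω‖) ^ 2 := pow_le_pow_left₀ (norm_nonneg _) hω 2
    _ = L ^ 2 * ‖g ω‖ ^ 2 := mul_pow _ _ _

lemma integral_norm_one_sub_smul_add_smul_sq_le [NormedAddCommGroup E] [NormedSpace ℝ E]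
    {a : ℝ} (ha₀ : 0 ≤ a) (ha₁ : a ≤ 1) {f g : Ω → E} (hf : MemLp f 2 μ) (hg : MemLp g 2 μ) :
    ∫ ω, ‖(1 - a) • f ω + a • g ω‖ ^ 2 ∂μ
      ≤ (1 - a) * ∫ ω, ‖f ω‖ ^ 2 ∂μ + a * ∫ ω, ‖g ω‖ ^ 2 ∂μ := by
  have hf2 := (hf.integrable_norm_pow two_ne_zero).const_mul (1 - a)
  have hg2 := (hg.integrable_norm_pow two_ne_zero).const_mul a
  rw [← integral_const_mul, ← integral_const_mul, ← integral_add hf2 hg2]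
  exact integral_mono_of_nonneg (.of_forall fun _ ↦ by positivity) (hf2.add hg2)
    (.of_forall fun ω ↦ norm_one_sub_smul_add_smul_sq_le ha₀ ha₁ (f ω) (g ω))

end MeasureTheory

theorem stmt_17_general {d : ℕ} {Ω : Type*} {mΩ : MeasurableSpace Ω}
    (μ : Measure Ω) [IsProbabilityMeasure μ]
    (m : MeasurableSpace Ω) (hm : m ≤ mΩ)
    (α L σ : ℝ) (hα0 : 0 < α) (hα1 : α ≤ 1)
    (e g ξ x : Ω → EuclideanSpace ℝ (Fin d)) (xbar : EuclideanSpace ℝ (Fin d))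
    (he : MemLp e 2 μ) (hgmem : MemLp g 2 μ) (hξmem : MemLp ξ 2 μ)
    (hxmem : MemLp x 2 μ)
    (hem : StronglyMeasurable[m] e) (hgm : StronglyMeasurable[m] g)
    (hξzero : μ[ξ|m] =ᵐ[μ] 0)
    (hξvar : ∫ ω, ‖ξ ω‖ ^ 2 ∂μ ≤ σ ^ 2)
    (hg : ∀ᵐ ω ∂μ, ‖g ω‖ ≤ L * ‖x ω - xbar‖) :
    ∫ ω, ‖(1 - α) • e ω + α • (ξ ω + g ω)‖ ^ 2 ∂μ
      ≤ (1 - α) * ∫ ω, ‖e ω‖ ^ 2 ∂μ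
        + α * L ^ 2 * ∫ ω, ‖x ω - xbar‖ ^ 2 ∂μ + α ^ 2 * σ ^ 2 := by
  set v := fun ω ↦ (1 - α) • e ω + α • g ω
  have hsplit : ∀ ω, (1 - α) • e ω + α • (ξ ω + g ω) = v ω + α • ξ ω := fun ω ↦ by
    simp only [v]; module
  have hv : MemLp v 2 μ := (he.const_smul (1 - α)).add (hgmem.const_smul α)
  have hvm : StronglyMeasurable[m] v := (hem.const_smul (1 - α)).add (hgm.const_smul α)
  have hv_le := integral_norm_one_sub_smul_add_smul_sq_le hα0.le hα1 he hgmem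
  have hg_le := integral_norm_sq_le_of_norm_le (g := fun ω ↦ x ω - xbar)
    (hxmem.sub (memLp_const xbar)) hg
  simp_rw [hsplit]
  rw [integral_norm_add_smul_sq_of_condExp_eq_zero hm hv hvm.aestronglyMeasurable hξmem hξzero]
  linarith [mul_le_mul_of_nonneg_left hg_le hα0.le, mul_le_mul_of_nonneg_left hξvar (sq_nonneg α)]

theorem stmt_17 {d : ℕ} {Ω : Type*} {mΩ : MeasurableSpace Ω}
    (μ : Measure Ω) [IsProbabilityMeasure μ]
    (m : MeasurableSpace Ω) (hm : m ≤ mΩ)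
    (α L σ : ℝ) (hα0 : 0 < α) (hα1 : α ≤ 1) (hL : 0 ≤ L) (hσ : 0 ≤ σ)
    (e g ξ x : Ω → EuclideanSpace ℝ (Fin d)) (xbar : EuclideanSpace ℝ (Fin d))
    (he : MemLp e 2 μ) (hgmem : MemLp g 2 μ) (hξmem : MemLp ξ 2 μ)
    (hxmem : MemLp x 2 μ)
    (hem : StronglyMeasurable[m] e) (hgm : StronglyMeasurable[m] g)
    (hxm : StronglyMeasurable[m] x)
    (hξzero : μ[ξ|m] =ᵐ[μ] 0)
    (hξvar : ∫ ω, ‖ξ ω‖ ^ 2 ∂μ ≤ σ ^ 2)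
    (hg : ∀ᵐ ω ∂μ, ‖g ω‖ ≤ L * ‖x ω - xbar‖) :
    ∫ ω, ‖(1 - α) • e ω + α • (ξ ω + g ω)‖ ^ 2 ∂μ
      ≤ (1 - α) * ∫ ω, ‖e ω‖ ^ 2 ∂μ
        + α * L ^ 2 * ∫ ω, ‖x ω - xbar‖ ^ 2 ∂μ + α ^ 2 * σ ^ 2 :=
  stmt_17_general μ m hm α L σ hα0 hα1 e g ξ x xbar he hgmem hξmem hxmem hem hgm hξzero hξvar hg
end
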